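/- Let X be an irreducible, aperiodic, positive recurrent Markov chain on a countable set A with stationary distribution π, and suppose X is reversible (π(x)Q(x,y) = π(y)Q(y,x)). Then for any nonnegative measurable f and any n ≥ 1, E_π[f(L_n)] = E_π[f(L_{n+1}(X_1) − 1)], i.e., under the stationary initial distribution, L_n has the same distribution as L_{n+1}(X_1) − 1. -/

import Mathlib

open MeasureTheory ENNReal Finset

/-- The finite-dimensional law of a Markov chain `X` (indexed from 0) with initial
distribution `μ` and transition operator `Q`. -/
def IsChainLaw {A Ω : Type*} [MeasurableSpace Ω] (P : Measure Ω) (X : ℕ → Ω → A)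
    (μ : A → ℝ≥0∞) (Q : A → A → ℝ≥0∞) : Prop :=
  ∀ (n : ℕ) (a : ℕ → A),
    P (⋂ i ∈ Finset.range (n + 1), {ω | X i ω = a i}) =
      μ (a 0) * ∏ i ∈ Finset.range n, Q (a i) (a (i + 1))

/-!
Reversibility makes the weight `π a₀ * ∏ Q aᵢ aᵢ₊₁` of a path `(a₀, …, aₙ)` invariant under
time reversal. Reversing a path turns the number of visits to the final state before time `n`
(that is `L_n`) into the number of visits to the initial state, minus the visit at time `0`
(that is `L_{n+1}(X_1) − 1`). As `X` is not assumed measurable, both expectations are computed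
as sums over the countably many paths: the path cylinders cover `Ω` and their outer measures
sum to `1`, which forces them to be null-measurable.
-/

section NullMeasurable

variable {Ω : Type*} [MeasurableSpace Ω] {μ : Measure Ω} [IsFiniteMeasure μ]

theorem nullMeasurableSet_of_measure_add_compl_le {s : Set Ω}
    (h : μ s + μ sᶜ ≤ μ Set.univ) : NullMeasurableSet s μ := by
  set D := toMeasurable μ s
  set E := toMeasurable μ sᶜ
  have hDE : μ (D ∩ E) = 0 := by
    have hcover : D ∪ E = Set.univ := Set.eq_univ_of_forall fun ω =>
      (em (ω ∈ s)).imp (subset_toMeasurable μ s ·) (subset_toMeasurable μ sᶜ ·)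
    have hsplit := measure_union_add_inter (μ := μ) D (measurableSet_toMeasurable μ sᶜ)
    rw [hcover, measure_toMeasurable, measure_toMeasurable] at hsplit
    have : μ Set.univ + μ (D ∩ E) ≤ μ Set.univ + 0 := by rw [add_zero, hsplit]; exact h
    exact nonpos_iff_eq_zero.1 ((ENNReal.add_le_add_iff_left (measure_ne_top μ _)).1 this)
  refine (measurableSet_toMeasurable μ s).nullMeasurableSet.congr (ae_eq_set.2 ⟨?_, ?_⟩)
  · exact measure_mono_null (fun ω (hω : ω ∈ D \ s) =>
      (⟨hω.1, subset_toMeasurable μ sᶜ hω.2⟩ : ω ∈ D ∩ E)) hDE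
  · rw [Set.sdiff_eq_empty.2 (subset_toMeasurable μ s), measure_empty]

variable {α : Type*} [Countable α]

theorem nullMeasurableSet_preimage_singleton_of_tsum_eq {Y : Ω → α}
    (hY : ∑' a, μ (Y ⁻¹' {a}) = μ Set.univ) (a : α) : NullMeasurableSet (Y ⁻¹' {a}) μ := by
  classical
  refine nullMeasurableSet_of_measure_add_compl_le ?_
  have hcompl : μ (Y ⁻¹' {a})ᶜ ≤ ∑' b, if b = a then 0 else μ (Y ⁻¹' {b}) :=
    calc μ (Y ⁻¹' {a})ᶜ ≤ μ (⋃ b, if b = a then ∅ else Y ⁻¹' {b}) :=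
          measure_mono fun ω hω => Set.mem_iUnion.2 ⟨Y ω, by simpa [eq_comm] using hω⟩
      _ ≤ ∑' b, μ (if b = a then ∅ else Y ⁻¹' {b}) := measure_iUnion_le _
      _ = ∑' b, if b = a then 0 else μ (Y ⁻¹' {b}) := by
          congr with b; split_ifs <;> simp
  calc μ (Y ⁻¹' {a}) + μ (Y ⁻¹' {a})ᶜ
      ≤ μ (Y ⁻¹' {a}) + ∑' b, if b = a then 0 else μ (Y ⁻¹' {b}) := by gcongr
    _ = μ Set.univ := by rw [← ENNReal.tsum_eq_add_tsum_ite (f := fun b => μ (Y ⁻¹' {b})) a, hY]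

theorem lintegral_comp_eq_tsum_of_tsum_eq {Y : Ω → α}
    (hY : ∑' a, μ (Y ⁻¹' {a}) = μ Set.univ) (F : α → ℝ≥0∞) :
    ∫⁻ ω, F (Y ω) ∂μ = ∑' a, F a * μ (Y ⁻¹' {a}) := by
  have hfibers := nullMeasurableSet_preimage_singleton_of_tsum_eq hY
  have hF : (fun ω => F (Y ω)) = fun ω => ∑' a, (Y ⁻¹' {a}).indicator (fun _ => F a) ω := by
    funext ω
    rw [tsum_eq_single (f := fun b => (Y ⁻¹' {b}).indicator (fun _ => F b) ω) (Y ω)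
      fun b hb => Set.indicator_of_notMem (Ne.symm hb) _]
    exact (Set.indicator_of_mem rfl _).symm
  rw [hF, lintegral_tsum fun a => aemeasurable_const.indicator₀ (hfibers a)]
  exact tsum_congr fun a => lintegral_indicator_const₀ (hfibers a) _

end NullMeasurable

section PathWeight

variable {A : Type*} (π : A → ℝ≥0∞) (Q : A → A → ℝ≥0∞)

noncomputable def pathWeight {m : ℕ} (a : Fin (m + 1) → A) : ℝ≥0∞ :=
  π (a 0) * ∏ i : Fin m, Q (a i.castSucc) (a i.succ)

theorem pathWeight_snoc {m : ℕ} (a : Fin (m + 1) → A) (y : A) :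
    pathWeight π Q (Fin.snoc a y : Fin (m + 2) → A) = pathWeight π Q a * Q (a (Fin.last m)) y := by
  simp [pathWeight, Fin.prod_univ_castSucc, Fin.succ_castSucc, -Fin.castSucc_succ, mul_assoc]

theorem tsum_pathWeight (hQ : ∀ x, ∑' y, Q x y = 1) (hπ : ∑' x, π x = 1) :
    ∀ m : ℕ, ∑' a : Fin (m + 1) → A, pathWeight π Q a = 1
  | 0 => by
    rw [← (Equiv.funUnique (Fin 1) A).symm.tsum_eq]
    simpa [pathWeight] using hπ
  | m + 1 => by
    rw [← (Fin.snocEquiv fun _ => A).tsum_eq, ENNReal.tsum_prod', ENNReal.tsum_comm]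
    simp [Fin.snocEquiv, pathWeight_snoc, ENNReal.tsum_mul_left, hQ, tsum_pathWeight hQ hπ m]

theorem pi_last_mul_prod_reverse_eq_pathWeight (hrev : ∀ x y, π x * Q x y = π y * Q y x) :
    ∀ {m : ℕ} (a : Fin (m + 1) → A),
      π (a (Fin.last m)) * ∏ i : Fin m, Q (a i.succ) (a i.castSucc) = pathWeight π Q a
  | 0, a => by simp [pathWeight, Fin.last]
  | m + 1, a => by
    obtain ⟨⟨y, b⟩, rfl⟩ := (Fin.snocEquiv fun _ => A).surjective a
    simp only [Fin.snocEquiv, Equiv.coe_fn_mk, Fin.snoc_last, Fin.snoc_castSucc,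
      Fin.prod_univ_castSucc, Fin.succ_castSucc, Fin.succ_last, pathWeight_snoc]
    rw [← pi_last_mul_prod_reverse_eq_pathWeight hrev b, mul_right_comm _ _ (Q _ y), hrev]
    ring

theorem pathWeight_rev (hrev : ∀ x y, π x * Q x y = π y * Q y x) {m : ℕ}
    (a : Fin (m + 1) → A) : pathWeight π Q (fun i => a i.rev) = pathWeight π Q a := by
  rw [← pi_last_mul_prod_reverse_eq_pathWeight π Q hrev a, pathWeight, Fin.rev_zero]
  congr 1
  simp only [Fin.rev_castSucc, Fin.rev_succ]
  exact Fintype.prod_equiv Fin.revPerm _ _ fun _ => rfl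

end PathWeight

section LocalTime

variable {A : Type*} [DecidableEq A]

def localTime {m : ℕ} (a : Fin m → A) (x : A) : ℕ :=
  ∑ i, if a i = x then 1 else 0

theorem localTime_rev {m : ℕ} (a : Fin m → A) (x : A) :
    localTime (fun i => a i.rev) x = localTime a x :=
  Fintype.sum_equiv Fin.revPerm _ _ fun _ => rfl

theorem localTime_eq_localTime_init_add_ite {m : ℕ} (a : Fin (m + 1) → A) (x : A) :
    localTime a x = localTime (Fin.init a) x + if a (Fin.last m) = x then 1 else 0 :=
  Fin.sum_univ_castSucc _

theorem localTime_rev_zero_sub_one {m : ℕ} (a : Fin (m + 1) → A) :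
    localTime (fun i => a i.rev) (a (Fin.rev 0)) - 1 = localTime (Fin.init a) (a (Fin.last m)) := by
  rw [localTime_rev, Fin.rev_zero, localTime_eq_localTime_init_add_ite, if_pos rfl,
    Nat.add_sub_cancel]

end LocalTime

theorem IsChainLaw.measure_path_eq {A Ω : Type*} [MeasurableSpace Ω] {P : Measure Ω}
    {X : ℕ → Ω → A} {μ : A → ℝ≥0∞} {Q : A → A → ℝ≥0∞} (hX : IsChainLaw P X μ Q) (n : ℕ)
    (a : Fin (n + 1) → A) :
    P ((fun ω (j : Fin (n + 1)) => X j ω) ⁻¹' {a}) = pathWeight μ Q a := by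
  let a' : ℕ → A := fun i => if h : i < n + 1 then a ⟨i, h⟩ else a 0
  have hpath : (fun ω (j : Fin (n + 1)) => X j ω) ⁻¹' {a} =
      ⋂ i ∈ Finset.range (n + 1), {ω | X i ω = a' i} := by
    ext ω
    simp only [Set.mem_preimage, Set.mem_singleton_iff, funext_iff, Fin.forall_iff, Set.mem_iInter,
      Finset.mem_range, Set.mem_ofPred_eq, a']
    exact forall₂_congr fun i hi => by rw [dif_pos hi]
  have ha' : ∀ j : Fin (n + 1), a' j = a j := fun j => dif_pos j.isLt
  rw [hpath, hX, pathWeight, Finset.prod_range]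
  simp only [← ha', Fin.val_castSucc, Fin.val_succ, Fin.val_zero]

/-- Chains are indexed from 0, so `X_1` of the paper is `X 0`. -/
theorem reversible_Ln_eq_local_time_general {A : Type*} [Countable A] [DecidableEq A]
    {Ω : Type*} [MeasurableSpace Ω]
    (P : Measure Ω) [IsProbabilityMeasure P]
    (X : ℕ → Ω → A)
    (Q : A → A → ℝ≥0∞) (π : A → ℝ≥0∞)
    (hQ : ∀ x, ∑' y, Q x y = 1)
    (hπsum : ∑' x, π x = 1)
    (hrev : ∀ x y, π x * Q x y = π y * Q y x)
    (hX : IsChainLaw P X π Q)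
    (f : ℕ → ℝ≥0∞) (n : ℕ) :
    ∫⁻ ω, f (∑ i ∈ Finset.range n, if X i ω = X n ω then 1 else 0) ∂P =
      ∫⁻ ω, f ((∑ i ∈ Finset.range (n + 1), if X i ω = X 0 ω then 1 else 0) - 1) ∂P := by
  let Y : Ω → Fin (n + 1) → A := fun ω j => X j ω
  have hY : ∑' a, P (Y ⁻¹' {a}) = P Set.univ := by
    simp only [Y, hX.measure_path_eq, tsum_pathWeight π Q hQ hπsum, measure_univ]
  let reverse : Equiv.Perm (Fin (n + 1) → A) := Equiv.arrowCongr Fin.revPerm (Equiv.refl A)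
  calc ∫⁻ ω, f (∑ i ∈ Finset.range n, if X i ω = X n ω then 1 else 0) ∂P
      = ∑' a, f (localTime (Fin.init a) (a (Fin.last n))) * P (Y ⁻¹' {a}) := by
        rw [← lintegral_comp_eq_tsum_of_tsum_eq hY]
        simp only [localTime, Finset.sum_range]
        rfl
    _ = ∑' a, f (localTime (reverse a) (reverse a 0) - 1) * P (Y ⁻¹' {reverse a}) := by
        refine tsum_congr fun a => ?_
        show _ = f (localTime (fun i => a i.rev) (a (Fin.rev 0)) - 1) *
          P (Y ⁻¹' {fun i => a i.rev})
        rw [localTime_rev_zero_sub_one, hX.measure_path_eq, hX.measure_path_eq,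
          pathWeight_rev π Q hrev]
    _ = ∑' a, f (localTime a (a 0) - 1) * P (Y ⁻¹' {a}) :=
        reverse.tsum_eq fun a => f (localTime a (a 0) - 1) * P (Y ⁻¹' {a})
    _ = ∫⁻ ω, f ((∑ i ∈ Finset.range (n + 1), if X i ω = X 0 ω then 1 else 0) - 1) ∂P := by
        rw [← lintegral_comp_eq_tsum_of_tsum_eq hY]
        simp only [localTime, Finset.sum_range]
        rfl

/-- if the chain is reversible and started from its stationary
distribution `π`, then `E_π[f(L_n)] = E_π[f(L_{n+1}(X_1) − 1)]` for every nonnegative `f`,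
i.e. under `P_π`, `L_n` has the same distribution as `L_{n+1}(X_1) − 1`.
(Chains are indexed from 0, so `X_1` of the paper is `X 0`.) -/
theorem reversible_Ln_eq_local_time {A : Type*} [Countable A] [DecidableEq A]
    {Ω : Type*} [MeasurableSpace Ω]
    (P : Measure Ω) [IsProbabilityMeasure P]
    (X : ℕ → Ω → A)
    (Q : A → A → ℝ≥0∞) (π : A → ℝ≥0∞)
    (hQ : ∀ x, ∑' y, Q x y = 1)
    (hπpos : ∀ x, 0 < π x) (hπfin : ∀ x, π x ≠ ∞) (hπsum : ∑' x, π x = 1)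
    (hstat : ∀ x, ∑' y, π y * Q y x = π x)
    (hirr : ∀ x y, ∃ t : ℕ, ∃ b : ℕ → A, b 0 = x ∧ b t = y ∧
      0 < ∏ i ∈ Finset.range t, Q (b i) (b (i + 1)))
    (hrev : ∀ x y, π x * Q x y = π y * Q y x)
    (hX : IsChainLaw P X π Q)
    (f : ℕ → ℝ≥0∞) (n : ℕ) (hn : 1 ≤ n) :
    ∫⁻ ω, f (∑ i ∈ Finset.range n, if X i ω = X n ω then 1 else 0) ∂P =
      ∫⁻ ω, f ((∑ i ∈ Finset.range (n + 1), if X i ω = X 0 ω then 1 else 0) - 1) ∂P :=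
  reversible_Ln_eq_local_time_general P X Q π hQ hπsum hrev hX f n
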